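/- arXiv:1305.4034 — 5 statements merged into one kernel-verified Lean document; each statement's English description precedes it below -/
import Mathlib

section
/- For every fuzzy bitopological space (X, τ₁, τ₂) and every μ ∈ τ₁, the map h_μ : X → L defined by h_μ(x) = (μ(x), 0) is bicontinuous from (X,τ₁,τ₂) to (L,Δ₁,Δ₂), and h_μ⁻¹(p₁) = μ, i.e., p₁ ∘ h_μ = μ. -/
noncomputable section
attribute [local instance] Classical.propDecidable

/-- Membership in the frame `L = {(a,b) ∈ [0,1]² : a + b ≤ 1}`. -/
abbrev Lmem (p : ℝ × ℝ) : Prop :=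
  0 ≤ p.1 ∧ p.1 ≤ 1 ∧ 0 ≤ p.2 ∧ p.2 ≤ 1 ∧ p.1 + p.2 ≤ 1

/-- The carrier of the frame `L`. -/
abbrev LL : Type := {p : ℝ × ℝ // Lmem p}

/-- The unit square `I² = [0,1] × [0,1]`. -/
abbrev I2 : Type := {p : ℝ × ℝ // 0 ≤ p.1 ∧ p.1 ≤ 1 ∧ 0 ≤ p.2 ∧ p.2 ≤ 1}

/-- `2I = (I × {0}) ∪ ({0} × I)`. -/
abbrev TwoI : Type :=
  {p : ℝ × ℝ // (0 ≤ p.1 ∧ p.1 ≤ 1 ∧ p.2 = 0) ∨ (p.1 = 0 ∧ 0 ≤ p.2 ∧ p.2 ≤ 1)}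

/-- A fuzzy (Chang) topology on `X`: a family of `[0,1]`-valued maps containing the
constants `0̄`, `1̄`, closed under arbitrary (nonempty) pointwise suprema and binary
pointwise infima. -/
def IsFuzzyTopology {X : Type} (τ : Set (X → ℝ)) : Prop :=
  (∀ μ ∈ τ, ∀ x, 0 ≤ μ x ∧ μ x ≤ 1) ∧
  ((fun _ => (0:ℝ)) ∈ τ) ∧
  ((fun _ => (1:ℝ)) ∈ τ) ∧
  (∀ S : Set (X → ℝ), S.Nonempty → S ⊆ τ → (fun x => ⨆ μ : S, (μ : X → ℝ) x) ∈ τ) ∧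
  (∀ μ ∈ τ, ∀ ν ∈ τ, (fun x => min (μ x) (ν x)) ∈ τ)

/-- Bicontinuity of a map between fuzzy bitopological spaces. -/
def Bicontinuous {X Y : Type} (f : X → Y)
    (τ₁ τ₂ : Set (X → ℝ)) (δ₁ δ₂ : Set (Y → ℝ)) : Prop :=
  (∀ ν ∈ δ₁, (fun x => ν (f x)) ∈ τ₁) ∧ (∀ ν ∈ δ₂, (fun x => ν (f x)) ∈ τ₂)

/-- The `T₀` separation property for a fuzzy bitopological space. -/
def IsT0 {X : Type} (τ₁ τ₂ : Set (X → ℝ)) : Prop :=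
  ∀ x y : X, x ≠ y → ∃ μ ∈ τ₁ ∪ τ₂, μ x ≠ μ y

/-- First projection `p₁` on `L`. -/
def pOne : LL → ℝ := fun z => z.1.1

/-- The map `1̄ - p₂` on `L`. -/
def pTwoC : LL → ℝ := fun z => 1 - z.1.2

/-- The fuzzy topology `Δ₁ = {0̄, p₁, 1̄}` on `L`. -/
def Delta1 : Set (LL → ℝ) := {fun _ => 0, pOne, fun _ => 1}

/-- The fuzzy topology `Δ₂ = {0̄, 1̄ - p₂, 1̄}` on `L`. -/
def Delta2 : Set (LL → ℝ) := {fun _ => 0, pTwoC, fun _ => 1}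

/-- The fuzzy topology `Π₁ = {0̄, π₁, 1̄}` on `I²`. -/
def Pi1 : Set (I2 → ℝ) := {fun _ => 0, fun w => w.1.1, fun _ => 1}

/-- The fuzzy topology `Π₂ = {0̄, π₂, 1̄}` on `I²`. -/
def Pi2 : Set (I2 → ℝ) := {fun _ => 0, fun w => w.1.2, fun _ => 1}

/-- The map `e : L → I²`, `e(a,b) = (a, 1-b)`. -/
def eMap : LL → I2 := fun z =>
  ⟨(z.1.1, 1 - z.1.2), by
    obtain ⟨h1, h2, h3, h4, h5⟩ := z.2
    exact ⟨h1, h2, by simp only [Prod.snd]; linarith, by simp only [Prod.snd]; linarith⟩⟩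

/-- The fuzzy set `q₁` on `2I`. -/
def q1 : TwoI → ℝ := fun z => if z.1.2 = 0 then z.1.1 else 0

/-- The fuzzy set `q₂` on `2I`. -/
def q2 : TwoI → ℝ := fun z => if z.1.1 = 0 then z.1.2 else 0

/-- The fuzzy topology `Ω₁ = {0̄, q₁, 1̄}` on `2I`. -/
def Omega1 : Set (TwoI → ℝ) := {fun _ => 0, q1, fun _ => 1}

/-- The fuzzy topology `Ω₂ = {0̄, q₂, 1̄}` on `2I`. -/
def Omega2 : Set (TwoI → ℝ) := {fun _ => 0, q2, fun _ => 1}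

/-- The join `τ₁ ∨ τ₂`: the smallest fuzzy topology containing `τ₁` and `τ₂`. -/
def joinFT {X : Type} (τ₁ τ₂ : Set (X → ℝ)) : Set (X → ℝ) :=
  ⋂₀ {δ : Set (X → ℝ) | IsFuzzyTopology δ ∧ τ₁ ⊆ δ ∧ τ₂ ⊆ δ}

namespace IsFuzzyTopology

variable {X Y : Type} {τ : Set (X → ℝ)}

theorem bounds (hτ : IsFuzzyTopology τ) {μ : X → ℝ} (hμ : μ ∈ τ) (x : X) :
    0 ≤ μ x ∧ μ x ≤ 1 :=
  hτ.1 μ hμ x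

theorem zero_mem (hτ : IsFuzzyTopology τ) : (fun _ => (0 : ℝ)) ∈ τ :=
  hτ.2.1

theorem one_mem (hτ : IsFuzzyTopology τ) : (fun _ => (1 : ℝ)) ∈ τ :=
  hτ.2.2.1

theorem comp_mem_of_mem_triple (hτ : IsFuzzyTopology τ) {f : X → Y} {ν : Y → ℝ}
    (hν : (fun x => ν (f x)) ∈ τ) :
    ∀ ρ ∈ ({fun _ => 0, ν, fun _ => 1} : Set (Y → ℝ)), (fun x => ρ (f x)) ∈ τ := by
  rintro ρ (rfl | rfl | rfl)
  · exact hτ.zero_mem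
  · exact hν
  · exact hτ.one_mem

end IsFuzzyTopology

/-- The map `h_μ : X → L`, `x ↦ (μ x, 0)`. -/
def embedFst {X : Type} (μ : X → ℝ) (hμ : ∀ x, 0 ≤ μ x ∧ μ x ≤ 1) : X → LL :=
  fun x => ⟨(μ x, 0), (hμ x).1, (hμ x).2, le_rfl, zero_le_one, by simpa using (hμ x).2⟩

theorem pOne_comp_embedFst {X : Type} (μ : X → ℝ) (hμ : ∀ x, 0 ≤ μ x ∧ μ x ≤ 1) :
    (fun x => pOne (embedFst μ hμ x)) = μ :=
  rfl

theorem pTwoC_comp_embedFst {X : Type} (μ : X → ℝ) (hμ : ∀ x, 0 ≤ μ x ∧ μ x ≤ 1) :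
    (fun x => pTwoC (embedFst μ hμ x)) = fun _ => 1 :=
  funext fun _ => sub_zero 1

/-- for `μ ∈ τ₁`, the map `h_μ(x) = (μ(x), 0)` is bicontinuous
into `(L, Δ₁, Δ₂)` and `p₁ ∘ h_μ = μ`. -/
theorem stmt7 (X : Type) (τ₁ τ₂ : Set (X → ℝ))
    (h₁ : IsFuzzyTopology τ₁) (h₂ : IsFuzzyTopology τ₂)
    (μ : X → ℝ) (hμ : μ ∈ τ₁) :
    ∃ h : X → LL, (∀ x, (h x).1 = (μ x, 0)) ∧
      Bicontinuous h τ₁ τ₂ Delta1 Delta2 ∧ (fun x => pOne (h x)) = μ := by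
  have hbounds := h₁.bounds hμ
  refine ⟨embedFst μ hbounds, fun _ => rfl, ⟨?_, ?_⟩, pOne_comp_embedFst μ hbounds⟩
  · exact h₁.comp_mem_of_mem_triple hμ
  · exact h₂.comp_mem_of_mem_triple (by rw [pTwoC_comp_embedFst]; exact h₂.one_mem)
end
end

section
/- (L, Δ₁, Δ₂) is a cogenerator in BFTS₀: for every pair of distinct bicontinuous maps f, g : (X,τ₁,τ₂) → (Y,δ₁,δ₂) between T₀ fuzzy bitopological spaces, there exists a bicontinuous map h : (Y,δ₁,δ₂) → (L,Δ₁,Δ₂) with h ∘ f ≠ h ∘ g. -/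
noncomputable section
attribute [local instance] Classical.propDecidable

/-! A point of `Y` where `f` and `g` differ is separated by some open fuzzy set `μ` of one of the
two topologies, by `T₀`. If `μ ∈ δ₁` then `y ↦ (μ y, 0)` is bicontinuous into `(L, Δ₁, Δ₂)`, and if
`μ ∈ δ₂` then `y ↦ (0, 1 - μ y)` is; in both cases `μ` is recovered from the map by composing with
`p₁`, resp. `1̄ - p₂`, so the map still separates `f x` from `g x`. -/

section Cogenerator

variable {Y : Type} {δ₁ δ₂ : Set (Y → ℝ)}

def toLFst (μ : Y → ℝ) (hμ : ∀ y, 0 ≤ μ y ∧ μ y ≤ 1) : Y → LL := fun y =>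
  ⟨(μ y, 0), (hμ y).1, (hμ y).2, le_rfl, zero_le_one, by simpa using (hμ y).2⟩

def toLSnd (μ : Y → ℝ) (hμ : ∀ y, 0 ≤ μ y ∧ μ y ≤ 1) : Y → LL := fun y =>
  ⟨(0, 1 - μ y), le_rfl, zero_le_one, by linarith [(hμ y).2], by linarith [(hμ y).1],
    by simpa using (hμ y).1⟩

theorem pOne_toLFst (μ : Y → ℝ) (hμ : ∀ y, 0 ≤ μ y ∧ μ y ≤ 1) (y : Y) :
    pOne (toLFst μ hμ y) = μ y := rfl

theorem pTwoC_toLSnd (μ : Y → ℝ) (hμ : ∀ y, 0 ≤ μ y ∧ μ y ≤ 1) (y : Y) :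
    pTwoC (toLSnd μ hμ y) = μ y :=
  sub_sub_cancel 1 (μ y)

theorem bicontinuous_to_L_of_mem (hδ₁ : IsFuzzyTopology δ₁) (hδ₂ : IsFuzzyTopology δ₂)
    {h : Y → LL} (h₁ : (fun y => pOne (h y)) ∈ δ₁) (h₂ : (fun y => pTwoC (h y)) ∈ δ₂) :
    Bicontinuous h δ₁ δ₂ Delta1 Delta2 := by
  constructor
  · rintro ν (rfl | rfl | rfl)
    exacts [hδ₁.2.1, h₁, hδ₁.2.2.1]
  · rintro ν (rfl | rfl | rfl)
    exacts [hδ₂.2.1, h₂, hδ₂.2.2.1]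

theorem bicontinuous_toLFst (hδ₁ : IsFuzzyTopology δ₁) (hδ₂ : IsFuzzyTopology δ₂)
    {μ : Y → ℝ} (hμ : μ ∈ δ₁) :
    Bicontinuous (toLFst μ (hδ₁.1 μ hμ)) δ₁ δ₂ Delta1 Delta2 := by
  refine bicontinuous_to_L_of_mem hδ₁ hδ₂ hμ ?_
  simpa [pTwoC, toLFst] using hδ₂.2.2.1

theorem bicontinuous_toLSnd (hδ₁ : IsFuzzyTopology δ₁) (hδ₂ : IsFuzzyTopology δ₂)
    {μ : Y → ℝ} (hμ : μ ∈ δ₂) :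
    Bicontinuous (toLSnd μ (hδ₂.1 μ hμ)) δ₁ δ₂ Delta1 Delta2 := by
  refine bicontinuous_to_L_of_mem hδ₁ hδ₂ ?_ ?_
  · simpa [pOne, toLSnd] using hδ₁.2.1
  · simpa only [pTwoC_toLSnd] using hμ

end Cogenerator

theorem comp_ne_comp_of_apply_ne {X Y Z : Type} {h : Y → Z} {φ : Z → ℝ} {μ : Y → ℝ}
    (hφ : ∀ y, φ (h y) = μ y) {f g : X → Y} {x : X} (hx : μ (f x) ≠ μ (g x)) :
    (fun x => h (f x)) ≠ fun x => h (g x) := fun heq =>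
  hx (by rw [← hφ, ← hφ, congrFun heq x])

theorem stmt10_general (X Y : Type) (δ₁ δ₂ : Set (Y → ℝ))
    (hδ₁ : IsFuzzyTopology δ₁) (hδ₂ : IsFuzzyTopology δ₂)
    (hY0 : IsT0 δ₁ δ₂)
    (f g : X → Y)
    (hne : f ≠ g) :
    ∃ h : Y → LL, Bicontinuous h δ₁ δ₂ Delta1 Delta2 ∧
      (fun x => h (f x)) ≠ (fun x => h (g x)) := by
  obtain ⟨x, hx⟩ := Function.ne_iff.mp hne
  obtain ⟨μ, hμ | hμ, hμx⟩ := hY0 (f x) (g x) hx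
  · exact ⟨_, bicontinuous_toLFst hδ₁ hδ₂ hμ,
      comp_ne_comp_of_apply_ne (pOne_toLFst μ _) hμx⟩
  · exact ⟨_, bicontinuous_toLSnd hδ₁ hδ₂ hμ,
      comp_ne_comp_of_apply_ne (pTwoC_toLSnd μ _) hμx⟩

/-- `(L, Δ₁, Δ₂)` is a cogenerator in `BFTS₀`. -/
theorem stmt10 (X Y : Type) (τ₁ τ₂ : Set (X → ℝ)) (δ₁ δ₂ : Set (Y → ℝ))
    (hτ₁ : IsFuzzyTopology τ₁) (hτ₂ : IsFuzzyTopology τ₂)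
    (hδ₁ : IsFuzzyTopology δ₁) (hδ₂ : IsFuzzyTopology δ₂)
    (hX0 : IsT0 τ₁ τ₂) (hY0 : IsT0 δ₁ δ₂)
    (f g : X → Y)
    (hf : Bicontinuous f τ₁ τ₂ δ₁ δ₂) (hg : Bicontinuous g τ₁ τ₂ δ₁ δ₂)
    (hne : f ≠ g) :
    ∃ h : Y → LL, Bicontinuous h δ₁ δ₂ Delta1 Delta2 ∧
      (fun x => h (f x)) ≠ (fun x => h (g x)) :=
  stmt10_general X Y δ₁ δ₂ hδ₁ hδ₂ hY0 f g hne
end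
end

section
/- Every frame homomorphism p : Δ₁ ∨ Δ₂ → [0,1] from the join fuzzy topology Δ₁ ∨ Δ₂ = {0̄, p₁, 1̄−p₂, 1̄} on L to [0,1] is of the form evaluation at a point of L; explicitly, if p(p₁) = α and p(1̄−p₂) = β, then α ≤ β, the pair (α, 1−β) lies in L, and p(μ) = μ(α, 1−β) for all μ ∈ Δ₁ ∨ Δ₂. Consequently x ↦ (μ ↦ μ(x)) is a bijection from L onto the set of frame homomorphisms Δ₁ ∨ Δ₂ → [0,1] (i.e., (L,Δ₁,Δ₂) is bisober). -/
noncomputable section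
attribute [local instance] Classical.propDecidable

/-- The join fuzzy topology `Δ₁ ∨ Δ₂ = {0̄, p₁, 1̄ - p₂, 1̄}` on `L`. -/
def DJoin : Set (LL → ℝ) := {fun _ => 0, pOne, pTwoC, fun _ => 1}

lemma zero_mem_DJoin : (fun _ : LL => (0:ℝ)) ∈ DJoin := by
  simp [DJoin]

lemma pOne_mem_DJoin : pOne ∈ DJoin := by
  simp [DJoin]

lemma pTwoC_mem_DJoin : pTwoC ∈ DJoin := by
  simp [DJoin]

lemma one_mem_DJoin : (fun _ : LL => (1:ℝ)) ∈ DJoin := by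
  simp [DJoin]

/-- A frame homomorphism `p : Δ₁ ∨ Δ₂ → [0,1]`: it sends `0̄ ↦ 0`, `1̄ ↦ 1` and
is order-preserving (since `Δ₁ ∨ Δ₂` is a finite chain, this is equivalent to
preserving arbitrary sups and finite infs). -/
def IsFramePoint (p : {μ : LL → ℝ // μ ∈ DJoin} → ℝ) : Prop :=
  p ⟨fun _ => 0, zero_mem_DJoin⟩ = 0 ∧
  p ⟨fun _ => 1, one_mem_DJoin⟩ = 1 ∧
  ∀ μ ν : {μ : LL → ℝ // μ ∈ DJoin}, (∀ z, μ.1 z ≤ ν.1 z) → p μ ≤ p ν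

lemma forall_mem_DJoin {P : {μ : LL → ℝ // μ ∈ DJoin} → Prop}
    (h0 : P ⟨fun _ => 0, zero_mem_DJoin⟩) (h1 : P ⟨pOne, pOne_mem_DJoin⟩)
    (h2 : P ⟨pTwoC, pTwoC_mem_DJoin⟩) (h3 : P ⟨fun _ => 1, one_mem_DJoin⟩) :
    ∀ μ, P μ := by
  rintro ⟨μ, hμ⟩
  simp only [DJoin, Set.mem_insert_iff, Set.mem_singleton_iff] at hμ
  rcases hμ with rfl | rfl | rfl | rfl <;> assumption

lemma pOne_nonneg (z : LL) : 0 ≤ pOne z := z.2.1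

lemma pOne_le_pTwoC (z : LL) : pOne z ≤ pTwoC z := by
  have := z.2.2.2.2.2
  simp only [pOne, pTwoC]
  linarith

lemma pTwoC_le_one (z : LL) : pTwoC z ≤ 1 := by
  have := z.2.2.2.1
  simp only [pTwoC]
  linarith

lemma eq_of_forall_DJoin_apply_eq {z w : LL}
    (h : ∀ μ : {μ : LL → ℝ // μ ∈ DJoin}, μ.1 z = μ.1 w) : z = w := by
  have h1 : z.1.1 = w.1.1 := h ⟨pOne, pOne_mem_DJoin⟩
  have h2 : 1 - z.1.2 = 1 - w.1.2 := h ⟨pTwoC, pTwoC_mem_DJoin⟩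
  exact Subtype.ext (Prod.ext h1 (by linarith))

namespace IsFramePoint

variable {p : {μ : LL → ℝ // μ ∈ DJoin} → ℝ} (hp : IsFramePoint p)
include hp

lemma apply_pOne_nonneg : 0 ≤ p ⟨pOne, pOne_mem_DJoin⟩ :=
  hp.1 ▸ hp.2.2 _ _ pOne_nonneg

lemma apply_pOne_le_apply_pTwoC : p ⟨pOne, pOne_mem_DJoin⟩ ≤ p ⟨pTwoC, pTwoC_mem_DJoin⟩ :=
  hp.2.2 _ _ pOne_le_pTwoC

lemma apply_pTwoC_le_one : p ⟨pTwoC, pTwoC_mem_DJoin⟩ ≤ 1 :=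
  hp.2.1 ▸ hp.2.2 _ _ pTwoC_le_one

lemma lmem : Lmem (p ⟨pOne, pOne_mem_DJoin⟩, 1 - p ⟨pTwoC, pTwoC_mem_DJoin⟩) := by
  have := hp.apply_pOne_nonneg
  have := hp.apply_pOne_le_apply_pTwoC
  have := hp.apply_pTwoC_le_one
  refine ⟨?_, ?_, ?_, ?_, ?_⟩ <;> dsimp only <;> linarith

def point : LL := ⟨_, hp.lmem⟩

lemma apply_eq_apply_point : ∀ μ, p μ = μ.1 hp.point :=
  forall_mem_DJoin hp.1 rfl (sub_sub_cancel 1 _).symm hp.2.1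

end IsFramePoint

/-- every frame homomorphism `p : Δ₁ ∨ Δ₂ → [0,1]` is evaluation
at the point `(p(p₁), 1 - p(1̄ - p₂)) ∈ L`, and `x ↦ (μ ↦ μ(x))` is a bijection
from `L` onto the frame homomorphisms, i.e. `(L, Δ₁, Δ₂)` is bisober. -/
theorem stmt13 :
    (∀ p, IsFramePoint p →
      p ⟨pOne, pOne_mem_DJoin⟩ ≤ p ⟨pTwoC, pTwoC_mem_DJoin⟩ ∧
      Lmem (p ⟨pOne, pOne_mem_DJoin⟩, 1 - p ⟨pTwoC, pTwoC_mem_DJoin⟩) ∧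
      ∃ z : LL,
        z.1 = (p ⟨pOne, pOne_mem_DJoin⟩, 1 - p ⟨pTwoC, pTwoC_mem_DJoin⟩) ∧
        ∀ μ : {μ : LL → ℝ // μ ∈ DJoin}, p μ = μ.1 z) ∧
    (∀ z w : LL, (∀ μ : {μ : LL → ℝ // μ ∈ DJoin}, μ.1 z = μ.1 w) → z = w) ∧
    (∀ p, IsFramePoint p →
      ∃ z : LL, ∀ μ : {μ : LL → ℝ // μ ∈ DJoin}, p μ = μ.1 z) :=
  ⟨fun _ hp => ⟨hp.apply_pOne_le_apply_pTwoC, hp.lmem, hp.point, rfl, hp.apply_eq_apply_point⟩,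
    fun _ _ => eq_of_forall_DJoin_apply_eq,
    fun _ hp => ⟨hp.point, hp.apply_eq_apply_point⟩⟩
end
end

section
/- The embedding e : (L,Δ₁,Δ₂) → (I²,Π₁,Π₂), e(a,b) = (a,1−b), is an epimorphism in BFTS₀: for any distinct bicontinuous maps f, g : (I²,Π₁,Π₂) → (Y,δ₁,δ₂) with (Y,δ₁,δ₂) T₀, we have f ∘ e ≠ g ∘ e. -/
noncomputable section
attribute [local instance] Classical.propDecidable

/-! The open sets of `Π₁` and `Π₂` are `0̄`, a projection and `1̄`, which take the distinct values
`0`, `1/2`, `1` at the centre `(1/2, 1/2) = e(1/2, 1/2)`. Hence if `f ∘ e = g ∘ e`, then for every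
open `μ` of `Y` the open sets `μ ∘ f` and `μ ∘ g` agree at the centre, so they coincide; since `Y`
is `T₀`, this forces `f = g`. -/

theorem injOn_eval_of_mem_Ioo {X : Type} (φ : X → ℝ) {p : X} (hp : φ p ∈ Set.Ioo 0 1) :
    Set.InjOn (fun ψ : X → ℝ => ψ p) {fun _ => 0, φ, fun _ => 1} := by
  simp only [Set.InjOn, Set.mem_insert_iff, Set.mem_singleton_iff]
  obtain ⟨hp₀, hp₁⟩ := hp
  rintro ψ (rfl | rfl | rfl) χ (rfl | rfl | rfl) h <;> first | rfl | (simp only at h; linarith)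

theorem eq_of_bicontinuous_of_injOn_eval {X Y : Type} {τ₁ τ₂ : Set (X → ℝ)}
    {δ₁ δ₂ : Set (Y → ℝ)} (hY : IsT0 δ₁ δ₂) {f g : X → Y}
    (hf : Bicontinuous f τ₁ τ₂ δ₁ δ₂) (hg : Bicontinuous g τ₁ τ₂ δ₁ δ₂) {p : X}
    (h₁ : Set.InjOn (fun ψ : X → ℝ => ψ p) τ₁) (h₂ : Set.InjOn (fun ψ : X → ℝ => ψ p) τ₂)
    (hp : f p = g p) : f = g := by
  funext x
  by_contra hx
  obtain ⟨μ, hμ | hμ, hμx⟩ := hY (f x) (g x) hx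
  · exact hμx (congrFun (h₁ (hf.1 μ hμ) (hg.1 μ hμ) (congrArg μ hp)) x)
  · exact hμx (congrFun (h₂ (hf.2 μ hμ) (hg.2 μ hμ) (congrArg μ hp)) x)

def centreL : LL := ⟨(1/2, 1/2), by refine ⟨?_, ?_, ?_, ?_, ?_⟩ <;> norm_num⟩

def centreI2 : I2 := ⟨(1/2, 1/2), by norm_num⟩

theorem eMap_centreL : eMap centreL = centreI2 := by
  simp only [eMap, centreL, centreI2]
  norm_num

theorem stmt15_general (Y : Type) (δ₁ δ₂ : Set (Y → ℝ))
    (hY0 : IsT0 δ₁ δ₂)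
    (f g : I2 → Y)
    (hf : Bicontinuous f Pi1 Pi2 δ₁ δ₂) (hg : Bicontinuous g Pi1 Pi2 δ₁ δ₂)
    (hne : f ≠ g) :
    (fun z => f (eMap z)) ≠ (fun z => g (eMap z)) := by
  intro h
  refine hne (eq_of_bicontinuous_of_injOn_eval hY0 hf hg (p := centreI2) ?_ ?_ ?_)
  · exact injOn_eval_of_mem_Ioo (fun w : I2 => w.1.1) (by norm_num [centreI2])
  · exact injOn_eval_of_mem_Ioo (fun w : I2 => w.1.2) (by norm_num [centreI2])
  · simpa only [eMap_centreL] using congrFun h centreL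

/-- the embedding `e : (L,Δ₁,Δ₂) → (I²,Π₁,Π₂)` is an epimorphism
in `BFTS₀`. -/
theorem stmt15 (Y : Type) (δ₁ δ₂ : Set (Y → ℝ))
    (hδ₁ : IsFuzzyTopology δ₁) (hδ₂ : IsFuzzyTopology δ₂) (hY0 : IsT0 δ₁ δ₂)
    (f g : I2 → Y)
    (hf : Bicontinuous f Pi1 Pi2 δ₁ δ₂) (hg : Bicontinuous g Pi1 Pi2 δ₁ δ₂)
    (hne : f ≠ g) :
    (fun z => f (eMap z)) ≠ (fun z => g (eMap z)) :=
  stmt15_general Y δ₁ δ₂ hY0 f g hf hg hne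
end
end

section
/- There is no bicontinuous map h : (I²,Π₁,Π₂) → (L,Δ₁,Δ₂) such that h ∘ e = id_L, where e(a,b) = (a,1−b); hence (L,Δ₁,Δ₂) is not injective with respect to the class of embeddings in BFTS₀. -/
noncomputable section
attribute [local instance] Classical.propDecidable

/-! Evaluating at points `e z`, where `h` returns `z`, rules out the constant members of
`Π₁` and `Π₂`, so `p₁ ∘ h = π₁` and `(1̄ - p₂) ∘ h = π₂`. Then `h (1,0)` would be the point
`(1,1)`, which lies outside `L`. -/

lemma eq_of_mem_zero_fun_one {X : Type} {φ ψ : X → ℝ}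
    (hφ : φ ∈ ({fun _ => 0, ψ, fun _ => 1} : Set (X → ℝ))) {x y : X}
    (hx : φ x ≠ 0) (hy : φ y ≠ 1) : φ = ψ := by
  rcases hφ with rfl | rfl | rfl
  · exact absurd rfl hx
  · rfl
  · exact absurd rfl hy

lemma pOne_comp_eq_fst {h : I2 → LL} (hret : ∀ z, h (eMap z) = z)
    (h₁ : (fun w => pOne (h w)) ∈ Pi1) : (fun w => pOne (h w)) = fun w => w.1.1 :=
  eq_of_mem_zero_fun_one h₁ (x := eMap ⟨(1, 0), by norm_num [Lmem]⟩)
    (y := eMap ⟨(0, 0), by norm_num [Lmem]⟩) (by simp [hret, pOne]) (by simp [hret, pOne])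

lemma pTwoC_comp_eq_snd {h : I2 → LL} (hret : ∀ z, h (eMap z) = z)
    (h₂ : (fun w => pTwoC (h w)) ∈ Pi2) : (fun w => pTwoC (h w)) = fun w => w.1.2 :=
  eq_of_mem_zero_fun_one h₂ (x := eMap ⟨(0, 0), by norm_num [Lmem]⟩)
    (y := eMap ⟨(0, 1), by norm_num [Lmem]⟩) (by simp [hret, pTwoC]) (by simp [hret, pTwoC])

/-- there is no bicontinuous `h : (I²,Π₁,Π₂) → (L,Δ₁,Δ₂)` with
`h ∘ e = id`, so `(L,Δ₁,Δ₂)` is not injective w.r.t. embeddings in `BFTS₀`. -/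
theorem stmt16 :
    ¬ ∃ h : I2 → LL, Bicontinuous h Pi1 Pi2 Delta1 Delta2 ∧
      (fun z => h (eMap z)) = id := by
  rintro ⟨h, ⟨hc₁, hc₂⟩, hret⟩
  have hid : ∀ z, h (eMap z) = z := congrFun hret
  let w : I2 := ⟨(1, 0), by norm_num⟩
  have hfst := congrFun (pOne_comp_eq_fst hid (hc₁ pOne (by simp [Delta1]))) w
  have hsnd := congrFun (pTwoC_comp_eq_snd hid (hc₂ pTwoC (by simp [Delta2]))) w
  simp only [pOne, pTwoC, w] at hfst hsnd
  linarith [(h w).2.2.2.2.2]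
end
end
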